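/- arXiv:1311.7303 — 5 statements merged into one kernel-verified Lean document; each statement's English description precedes it below -/
import Mathlib

section
/- Let K be a field, S = K[x₁,…,xₙ], and let I and J be monomial ideals of S such that I = uJ for some monomial u ∈ S and height J ≥ 2. If S/J is pretty clean, then S/I is pretty clean. -/
open MvPolynomial

variable {K : Type*} [Field K] {σ : Type*}

/-- An ideal of a polynomial ring is a *monomial ideal* if it is generated by monomials. -/
def IsMonomialIdeal (I : Ideal (MvPolynomial σ K)) : Prop :=
  ∃ G : Set (σ →₀ ℕ), I = Ideal.span ((fun d => (monomial d (1 : K))) '' G)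

/-- A *square-free monomial ideal* is an ideal generated by square-free monomials,
i.e. by monomials of the form `∏ i in s, X i` for finite sets `s` of variables. -/
def IsSquarefreeMonomialIdeal (I : Ideal (MvPolynomial σ K)) : Prop :=
  ∃ G : Set (Finset σ), I = Ideal.span ((fun s => ∏ i ∈ s, (X i : MvPolynomial σ K)) '' G)

/-- A *monomial prime ideal*: an ideal generated by a subset of the variables.
(These are exactly the monomial ideals which are prime.) -/
def IsMonomialPrime (p : Ideal (MvPolynomial σ K)) : Prop :=
  ∃ s : Set σ, p = Ideal.span ((fun i => (X i : MvPolynomial σ K)) '' s)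

/-- `S/I` is *clean* if there is a chain of monomial ideals
`I = I₀ ⊂ I₁ ⊂ ⋯ ⊂ I_r = S` with `I_i/I_{i-1} ≅ S/𝔭_i` for monomial prime ideals `𝔭_i`
which are all minimal primes of `I`. -/
def IsClean (I : Ideal (MvPolynomial σ K)) : Prop :=
  ∃ (r : ℕ) (F : Fin (r + 1) → Ideal (MvPolynomial σ K))
    (p : Fin r → Ideal (MvPolynomial σ K)),
    (∀ i, IsMonomialIdeal (F i)) ∧ F 0 = I ∧ F (Fin.last r) = ⊤ ∧
    (∀ i : Fin r, F i.castSucc < F i.succ) ∧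
    ∀ i : Fin r, IsMonomialPrime (p i) ∧ p i ∈ I.minimalPrimes ∧
      Nonempty ((↥(F i.succ) ⧸ (Submodule.comap (F i.succ).subtype (F i.castSucc)))
        ≃ₗ[MvPolynomial σ K] (MvPolynomial σ K ⧸ p i))

/-- `S/I` is *pretty clean* if there is a chain of monomial ideals
`I = I₀ ⊂ I₁ ⊂ ⋯ ⊂ I_r = S` with `I_i/I_{i-1} ≅ S/𝔭_i` for monomial prime ideals `𝔭_i`
such that `i < j` and `𝔭_i ⊆ 𝔭_j` imply `𝔭_i = 𝔭_j`. -/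
def IsPrettyClean (I : Ideal (MvPolynomial σ K)) : Prop :=
  ∃ (r : ℕ) (F : Fin (r + 1) → Ideal (MvPolynomial σ K))
    (p : Fin r → Ideal (MvPolynomial σ K)),
    (∀ i, IsMonomialIdeal (F i)) ∧ F 0 = I ∧ F (Fin.last r) = ⊤ ∧
    (∀ i : Fin r, F i.castSucc < F i.succ) ∧
    (∀ i : Fin r, IsMonomialPrime (p i) ∧
      Nonempty ((↥(F i.succ) ⧸ (Submodule.comap (F i.succ).subtype (F i.castSucc)))
        ≃ₗ[MvPolynomial σ K] (MvPolynomial σ K ⧸ p i))) ∧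
    ∀ i j : Fin r, i < j → p i ≤ p j → p i = p j

/-- The height of an ideal: the infimum of the heights of primes containing it. -/
noncomputable def idealHeight {R : Type*} [CommRing R] (I : Ideal R) : ℕ∞ :=
  sInf {h | ∃ p : PrimeSpectrum R, I ≤ p.asIdeal ∧ h = Order.height p}

/-- The minimal monomial generating set `G(I)` of a monomial ideal `I`. -/
def minimalMonomialGens (I : Ideal (MvPolynomial σ K)) : Set (MvPolynomial σ K) :=
  {f | ∃ d : σ →₀ ℕ, f = monomial d (1 : K) ∧ monomial d (1 : K) ∈ I ∧
    ∀ e : σ →₀ ℕ, e < d → monomial e (1 : K) ∉ I}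

/-- `μ(I)`, the number of elements of the minimal monomial generating set of `I`. -/
noncomputable def mu (I : Ideal (MvPolynomial σ K)) : ℕ :=
  (minimalMonomialGens I).ncard

/-- The graded maximal ideal `(x_i : i)` of the polynomial ring. -/
noncomputable def maxMonomialIdeal (K : Type*) [Field K] (σ : Type*) : Ideal (MvPolynomial σ K) :=
  Ideal.span (Set.range (X : σ → MvPolynomial σ K))

/-- The depth of `S/I` (as an `S`-module, with respect to the graded maximal ideal):
the supremum of lengths of regular sequences on `S/I` consisting of elements of the
graded maximal ideal. -/
noncomputable def quotDepth (I : Ideal (MvPolynomial σ K)) : ℕ :=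
  sSup {k | ∃ rs : List (MvPolynomial σ K), rs.length = k ∧
    (∀ a ∈ rs, a ∈ maxMonomialIdeal K σ) ∧
    RingTheory.Sequence.IsRegular (MvPolynomial σ K ⧸ I) rs}

/-- The Stanley space `u·K[Z]`, as a `K`-subspace of the polynomial ring: the `K`-span of
all monomials `X^(u+d)` where `d` is supported in `Z`. -/
noncomputable def stanleySpace (K : Type*) [Field K] {σ : Type*} (u : σ →₀ ℕ)
    (Z : Finset σ) : Submodule K (MvPolynomial σ K) :=
  Submodule.span K ((fun d => (monomial (u + d) (1 : K))) '' {d : σ →₀ ℕ | ↑d.support ⊆ (Z : Set σ)})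

/-- `S/I = ⊕_{i} u_i K[Z_i]` is a Stanley decomposition: each Stanley space embeds in `S/I`,
their images are independent, and they sum to `S/I`. -/
def IsStanleyDecomp (I : Ideal (MvPolynomial σ K)) {r : ℕ}
    (u : Fin r → (σ →₀ ℕ)) (Z : Fin r → Finset σ) : Prop :=
  (∀ i, Disjoint (stanleySpace K (u i) (Z i)) (I.restrictScalars K)) ∧
  iSupIndep (fun i => (stanleySpace K (u i) (Z i)).map
    ((Ideal.Quotient.mkₐ K I).toLinearMap.restrictScalars K)) ∧
  (⨆ i, (stanleySpace K (u i) (Z i)).map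
    ((Ideal.Quotient.mkₐ K I).toLinearMap.restrictScalars K)) = ⊤

/-- The Stanley depth of `S/I`: the supremum over all Stanley decompositions
`S/I = ⊕ u_i K[Z_i]` of `min |Z_i|`. -/
noncomputable def stanleyDepth (I : Ideal (MvPolynomial σ K)) : ℕ :=
  sSup {k | ∃ (r : ℕ) (u : Fin r → (σ →₀ ℕ)) (Z : Fin r → Finset σ),
    IsStanleyDecomp I u Z ∧ ∀ i, k ≤ (Z i).card}

/-- The Alexander dual `I^∨` of a square-free monomial ideal `I`: the ideal generated by
the monomials `∏_{i ∈ s} x_i` for which `(x_i : i ∈ s)` is a minimal prime of `I`. -/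
noncomputable def alexanderDual (I : Ideal (MvPolynomial σ K)) : Ideal (MvPolynomial σ K) :=
  Ideal.span ((fun s => ∏ i ∈ s, (X i : MvPolynomial σ K)) ''
    {s : Finset σ |
      Ideal.span ((fun i => (X i : MvPolynomial σ K)) '' (s : Set σ)) ∈ I.minimalPrimes})

/-- A monomial ideal `J` has *linear quotients* if there is an ordering `u₁, …, u_m` of its
minimal monomial generating set such that each colon ideal `(u₁,…,u_{i-1}) : u_i` is
generated by a subset of the variables. -/
def HasLinearQuotients (J : Ideal (MvPolynomial σ K)) : Prop :=
  ∃ (m : ℕ) (u : Fin m → MvPolynomial σ K), Function.Injective u ∧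
    Set.range u = minimalMonomialGens J ∧
    ∀ i : Fin m, 0 < (i : ℕ) →
      ∃ s : Set σ,
        Submodule.colon (Ideal.span (u '' {j : Fin m | (j : ℕ) < (i : ℕ)}))
            (Ideal.span {u i}) =
          Ideal.span ((fun i => (X i : MvPolynomial σ K)) '' s)
/-- A simplicial complex: a collection of finite subsets closed under taking subsets. -/
def IsSimplicialComplex (Δ : Set (Finset σ)) : Prop :=
  ∀ F ∈ Δ, ∀ G ⊆ F, G ∈ Δ

/-- The Stanley-Reisner ideal of `Δ`, generated by the square-free monomials
corresponding to non-faces of `Δ`. -/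
noncomputable def stanleyReisnerIdeal (K : Type*) [Field K] {σ : Type*} (Δ : Set (Finset σ)) :
    Ideal (MvPolynomial σ K) :=
  Ideal.span ((fun s => ∏ i ∈ s, (X i : MvPolynomial σ K)) '' {F | F ∉ Δ})

/-- A facet: a maximal face. -/
def IsFacet (Δ : Set (Finset σ)) (F : Finset σ) : Prop :=
  F ∈ Δ ∧ ∀ G ∈ Δ, F ⊆ G → F = G

/-- `Δ` is connected if any two facets can be joined by a chain of facets with
consecutive ones intersecting. -/
def IsConnectedComplex (Δ : Set (Finset σ)) : Prop :=
  ∀ F G : Finset σ, IsFacet Δ F → IsFacet Δ G →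
    ∃ (q : ℕ) (c : Fin (q + 1) → Finset σ), (∀ i, IsFacet Δ (c i)) ∧
      c 0 = F ∧ c (Fin.last q) = G ∧ ∀ i : Fin q, ∃ v, v ∈ c i.castSucc ∧ v ∈ c i.succ

/-- A homogeneous (graded) ideal of the polynomial ring with its standard grading. -/
def IsHomogeneousIdeal (p : Ideal (MvPolynomial σ K)) : Prop :=
  ∀ f ∈ p, ∀ d : ℕ, homogeneousComponent d f ∈ p

/-- `Δ` is locally complete intersection: every vertex is a face, and at every
prime `𝔭 ∈ Proj S/I_Δ` (a homogeneous prime containing `I_Δ` but not the irrelevant maximal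
ideal), the localization of `I_Δ` is generated by a regular sequence. -/
def IsLocallyCompleteIntersection (K : Type*) [Field K] {σ : Type*} (Δ : Set (Finset σ)) :
    Prop :=
  (∀ i : σ, ({i} : Finset σ) ∈ Δ) ∧
  ∀ (p : Ideal (MvPolynomial σ K)) [p.IsPrime], IsHomogeneousIdeal p →
    stanleyReisnerIdeal K Δ ≤ p → ¬ (maxMonomialIdeal K σ ≤ p) →
    ∃ rs : List (Localization p.primeCompl),
      RingTheory.Sequence.IsRegular (Localization p.primeCompl) rs ∧
      Ideal.map (algebraMap (MvPolynomial σ K) (Localization p.primeCompl))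
        (stanleyReisnerIdeal K Δ) = Ideal.span {x | x ∈ rs}


/-! Multiplying a pretty clean filtration `J = F₀ ⊂ ⋯ ⊂ F_r = S` by a variable `x` gives
`xJ = xF₀ ⊂ ⋯ ⊂ xF_r = (x) ⊂ S`, with the same successive quotients followed by `S ⧸ (x)`.
It stays pretty clean if no earlier prime lies inside `(x)`. Every earlier prime either contains
`J`, which cannot lie inside `(x)` since `(x)` has height one and `ht J ≥ 2`, or is generated by a
single variable, and then it equals `(x)` if it lies inside it. This invariant survives
multiplication by the variables of `u` one at a time. -/

section CommRing

variable {R : Type*} [CommRing R] {M M' : Type*} [AddCommGroup M] [Module R M]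
  [AddCommGroup M'] [Module R M']

theorem Submodule.nonempty_quotient_comap_subtype_map_equiv {f : M →ₗ[R] M'}
    (hf : Function.Injective f) (N P : Submodule R M) :
    Nonempty ((↥(N.map f) ⧸ comap (N.map f).subtype (P.map f)) ≃ₗ[R]
      (↥N ⧸ comap N.subtype P)) := by
  refine ⟨(Submodule.Quotient.equiv _ _ (N.equivMapOfInjective f hf) ?_).symm⟩
  ext ⟨_, x, hx, rfl⟩
  have : (N.equivMapOfInjective f hf).symm ⟨f x, _⟩ = ⟨x, hx⟩ :=
    (N.equivMapOfInjective f hf).symm_apply_eq.mpr rfl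
  simp [this, hf.eq_iff]

theorem Submodule.nonempty_quotient_comap_subtype_top_equiv (Q : Submodule R M) :
    Nonempty ((↥(⊤ : Submodule R M) ⧸ comap (⊤ : Submodule R M).subtype Q) ≃ₗ[R] (M ⧸ Q)) := by
  refine ⟨Submodule.Quotient.equiv _ _ Submodule.topEquiv ?_⟩
  ext x
  simp

def IsCyclicStep (A B p : Ideal R) : Prop :=
  A < B ∧ Nonempty ((↥B ⧸ Submodule.comap B.subtype A) ≃ₗ[R] R ⧸ p)

theorem IsCyclicStep.le {A B p : Ideal R} (h : IsCyclicStep A B p) : A ≤ p := by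
  obtain ⟨-, ⟨e⟩⟩ := h
  intro a ha
  rw [← Ideal.annihilator_quotient (I := p), ← e.annihilator_eq, Module.mem_annihilator]
  rintro ⟨x⟩
  exact (Submodule.Quotient.mk_eq_zero _).mpr (A.mul_mem_right (x : R) ha)

theorem isCyclicStep_top {Q : Ideal R} (hQ : Q ≠ ⊤) : IsCyclicStep Q ⊤ Q :=
  ⟨lt_top_iff_ne_top.mpr hQ, Submodule.nonempty_quotient_comap_subtype_top_equiv Q⟩

theorem Submodule.map_mulLeft_eq_span_singleton_mul (c : R) (N : Ideal R) :
    Submodule.map (LinearMap.mulLeft R c) N = Ideal.span {c} * N := by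
  ext x
  simp [Submodule.mem_map, Ideal.mem_span_singleton_mul]

theorem IsCyclicStep.span_singleton_mul [IsDomain R] {A B p : Ideal R} {c : R} (hc : c ≠ 0)
    (h : IsCyclicStep A B p) : IsCyclicStep (Ideal.span {c} * A) (Ideal.span {c} * B) p := by
  obtain ⟨hlt, ⟨e⟩⟩ := h
  refine ⟨by simpa only [lt_iff_le_not_ge, Ideal.span_singleton_mul_right_mono hc] using hlt, ?_⟩
  have hinj : Function.Injective (LinearMap.mulLeft R c) := mul_right_injective₀ hc
  obtain ⟨e'⟩ := Submodule.nonempty_quotient_comap_subtype_map_equiv hinj B A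
  rw [Submodule.map_mulLeft_eq_span_singleton_mul,
    Submodule.map_mulLeft_eq_span_singleton_mul] at e'
  exact ⟨e'.trans e⟩

theorem apply_zero_le_of_forall_isCyclicStep {r : ℕ} {F : Fin (r + 1) → Ideal R}
    {p : Fin r → Ideal R} (hF : ∀ i, IsCyclicStep (F i.castSucc) (F i.succ) (p i)) (i : Fin r) :
    F 0 ≤ p i :=
  have hmono : Monotone F := (Fin.strictMono_iff_lt_succ.mpr fun i => (hF i).1).monotone
  (hmono (Fin.zero_le _)).trans (hF i).le

theorem isCyclicStep_snoc_span_singleton_mul [IsDomain R] {r : ℕ} {F : Fin (r + 1) → Ideal R}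
    {p : Fin r → Ideal R} {c : R} (hc : c ≠ 0) (hcu : ¬IsUnit c)
    (hF : ∀ i, IsCyclicStep (F i.castSucc) (F i.succ) (p i)) (hlast : F (Fin.last r) = ⊤)
    (i : Fin (r + 1)) :
    IsCyclicStep (Fin.snoc (α := fun _ => Ideal R) (fun i => Ideal.span {c} * F i) ⊤ i.castSucc)
      (Fin.snoc (α := fun _ => Ideal R) (fun i => Ideal.span {c} * F i) ⊤ i.succ)
      (Fin.snoc (α := fun _ => Ideal R) p (Ideal.span {c}) i) := by
  induction i using Fin.lastCases with
  | last =>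
    rw [Fin.succ_last, Fin.snoc_last, Fin.snoc_castSucc, Fin.snoc_last, hlast, Ideal.mul_top]
    exact isCyclicStep_top (by rwa [Ne, Ideal.span_singleton_eq_top])
  | cast i =>
    rw [Fin.succ_castSucc, Fin.snoc_castSucc, Fin.snoc_castSucc, Fin.snoc_castSucc]
    exact (hF i).span_singleton_mul hc

theorem idealHeight_le_height {I : Ideal R} {p : PrimeSpectrum R} (h : I ≤ p.asIdeal) :
    idealHeight I ≤ p.asIdeal.height :=
  p.height_eq_orderHeight ▸ sInf_le ⟨p, h, rfl⟩

end CommRing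

theorem not_le_span_X_of_two_le_idealHeight [Finite σ] {J : Ideal (MvPolynomial σ K)}
    (hJ : 2 ≤ idealHeight J) (k : σ) : ¬J ≤ Ideal.span {X k} := by
  intro hle
  have hprime : (Ideal.span {(X k : MvPolynomial σ K)}).IsPrime :=
    (Ideal.span_singleton_prime (X_ne_zero k)).mpr X_prime
  have := (hJ.trans (idealHeight_le_height (p := ⟨_, hprime⟩) hle)).trans
    (Ideal.height_span_singleton_le_one X_prime.not_isUnit)
  norm_num at this

theorem span_X_le_span_X_iff {a k : σ} :
    Ideal.span {(X a : MvPolynomial σ K)} ≤ Ideal.span {X k} ↔ a = k := by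
  rw [Ideal.span_singleton_le_span_singleton, X_dvd_X, eq_comm]

theorem isMonomialIdeal_top : IsMonomialIdeal (⊤ : Ideal (MvPolynomial σ K)) :=
  ⟨{0}, by simp⟩

theorem IsMonomialIdeal.span_monomial_mul (d : σ →₀ ℕ) {I : Ideal (MvPolynomial σ K)}
    (hI : IsMonomialIdeal I) : IsMonomialIdeal (Ideal.span {monomial d (1 : K)} * I) := by
  obtain ⟨G, rfl⟩ := hI
  refine ⟨(d + ·) '' G, ?_⟩
  rw [Ideal.span_mul_span', Set.singleton_mul, Set.image_image, Set.image_image]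
  simp only [monomial_mul, one_mul]

theorem isMonomialPrime_span_X (k : σ) :
    IsMonomialPrime (Ideal.span {(X k : MvPolynomial σ K)}) :=
  ⟨{k}, by rw [Set.image_singleton]⟩

def IsPrettyCleanWith (P : Ideal (MvPolynomial σ K) → Prop) (I : Ideal (MvPolynomial σ K)) :
    Prop :=
  ∃ (r : ℕ) (F : Fin (r + 1) → Ideal (MvPolynomial σ K)) (p : Fin r → Ideal (MvPolynomial σ K)),
    (∀ i, IsMonomialIdeal (F i)) ∧ F 0 = I ∧ F (Fin.last r) = ⊤ ∧
    (∀ i, IsCyclicStep (F i.castSucc) (F i.succ) (p i)) ∧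
    (∀ i, IsMonomialPrime (p i) ∧ P (p i)) ∧
    ∀ i j : Fin r, i < j → p i ≤ p j → p i = p j

theorem IsPrettyClean.isPrettyCleanWith_le {J : Ideal (MvPolynomial σ K)}
    (h : IsPrettyClean J) : IsPrettyCleanWith (J ≤ ·) J := by
  obtain ⟨r, F, p, hmon, h0, hlast, hlt, hiso, hp⟩ := h
  have hF i : IsCyclicStep (F i.castSucc) (F i.succ) (p i) := ⟨hlt i, (hiso i).2⟩
  exact ⟨r, F, p, hmon, h0, hlast, hF,
    fun i => ⟨(hiso i).1, h0 ▸ apply_zero_le_of_forall_isCyclicStep hF i⟩, hp⟩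

theorem IsPrettyCleanWith.mono {P Q : Ideal (MvPolynomial σ K) → Prop} (hPQ : ∀ q, P q → Q q)
    {I : Ideal (MvPolynomial σ K)} (h : IsPrettyCleanWith P I) : IsPrettyCleanWith Q I := by
  obtain ⟨r, F, p, hmon, h0, hlast, hF, hP, hp⟩ := h
  exact ⟨r, F, p, hmon, h0, hlast, hF, fun i => ⟨(hP i).1, hPQ _ (hP i).2⟩, hp⟩

theorem IsPrettyCleanWith.isPrettyClean {P : Ideal (MvPolynomial σ K) → Prop}
    {I : Ideal (MvPolynomial σ K)} (h : IsPrettyCleanWith P I) : IsPrettyClean I := by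
  obtain ⟨r, F, p, hmon, h0, hlast, hF, hP, hp⟩ := h
  exact ⟨r, F, p, hmon, h0, hlast, fun i => (hF i).1, fun i => ⟨(hP i).1, (hF i).2⟩, hp⟩

theorem IsPrettyCleanWith.span_X_mul {P : Ideal (MvPolynomial σ K) → Prop} {k : σ}
    (hPk : P (Ideal.span {X k})) (hP : ∀ q, P q → q ≤ Ideal.span {X k} → q = Ideal.span {X k})
    {I : Ideal (MvPolynomial σ K)} (h : IsPrettyCleanWith P I) :
    IsPrettyCleanWith P (Ideal.span {X k} * I) := by
  obtain ⟨r, F, p, hmon, h0, hlast, hF, hpP, hp⟩ := h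
  refine ⟨r + 1, Fin.snoc (fun i => Ideal.span {X k} * F i) ⊤, Fin.snoc p (Ideal.span {X k}),
    fun i => ?_, by simp [← h0], Fin.snoc_last _ _,
    isCyclicStep_snoc_span_singleton_mul (X_ne_zero k) X_prime.not_isUnit hF hlast,
    fun i => ?_, fun i j hij hle => ?_⟩
  · induction i using Fin.lastCases with
    | last => simpa using isMonomialIdeal_top
    | cast i => simpa [X] using (hmon i).span_monomial_mul (Finsupp.single k 1)
  · induction i using Fin.lastCases with
    | last => simpa using ⟨isMonomialPrime_span_X k, hPk⟩
    | cast i => simpa using hpP i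
  · induction j using Fin.lastCases with
    | last =>
      induction i using Fin.lastCases with
      | last => rfl
      | cast i =>
        simp only [Fin.snoc_castSucc, Fin.snoc_last] at hle ⊢
        exact hP _ (hpP i).2 hle
    | cast j =>
      induction i using Fin.lastCases with
      | last => exact absurd hij (Fin.castSucc_lt_last j).not_gt
      | cast i =>
        simp only [Fin.snoc_castSucc] at hle ⊢
        exact hp i j (Fin.castSucc_lt_castSucc_iff.mp hij) hle

theorem IsPrettyCleanWith.span_X_pow_mul {P : Ideal (MvPolynomial σ K) → Prop} {k : σ}
    (hPk : P (Ideal.span {X k})) (hP : ∀ q, P q → q ≤ Ideal.span {X k} → q = Ideal.span {X k})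
    {I : Ideal (MvPolynomial σ K)} (h : IsPrettyCleanWith P I) (b : ℕ) :
    IsPrettyCleanWith P (Ideal.span {X k ^ b} * I) := by
  induction b with
  | zero => simpa using h
  | succ b ih =>
    rw [pow_succ', ← Ideal.span_singleton_mul_span_singleton, mul_assoc]
    exact ih.span_X_mul hPk hP

theorem IsPrettyCleanWith.span_monomial_mul {P : Ideal (MvPolynomial σ K) → Prop}
    (hPX : ∀ k, P (Ideal.span {X k}))
    (hP : ∀ k q, P q → q ≤ Ideal.span {X k} → q = Ideal.span {X k})
    {I : Ideal (MvPolynomial σ K)} (h : IsPrettyCleanWith P I) (u : σ →₀ ℕ) :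
    IsPrettyCleanWith P (Ideal.span {monomial u (1 : K)} * I) := by
  induction u using Finsupp.induction with
  | zero => simpa using h
  | single_add a b f _ _ ih =>
    rw [monomial_single_add, ← Ideal.span_singleton_mul_span_singleton, mul_assoc]
    exact ih.span_X_pow_mul (hPX a) (hP a) b

theorem prettyClean_of_monomial_mul_general {K : Type*} [Field K] {n : ℕ}
    (I J : Ideal (MvPolynomial (Fin n) K)) (u : Fin n →₀ ℕ)
    (huJ : I = Ideal.span {(monomial u (1 : K) : MvPolynomial (Fin n) K)} * J)
    (hht : 2 ≤ idealHeight J) (hpc : IsPrettyClean J) : IsPrettyClean I := by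
  let P q := J ≤ q ∨ ∃ a, q = Ideal.span {(X a : MvPolynomial (Fin n) K)}
  have hP k q (hq : P q) (hle : q ≤ Ideal.span {X k}) : q = Ideal.span {X k} := by
    obtain hJq | ⟨a, rfl⟩ := hq
    · exact absurd (hJq.trans hle) (not_le_span_X_of_two_le_idealHeight hht k)
    · rw [span_X_le_span_X_iff.mp hle]
  rw [huJ]
  exact ((hpc.isPrettyCleanWith_le.mono fun _ => Or.inl).span_monomial_mul
    (fun k => Or.inr ⟨k, rfl⟩) hP u).isPrettyClean

/-- Lemma 2.2: If `I = u·J` for a monomial `u`, with `I, J` monomial ideals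
and `ht J ≥ 2`, then pretty cleanness of `S/J` implies pretty cleanness of `S/I`. -/
theorem prettyClean_of_monomial_mul {K : Type*} [Field K] {n : ℕ}
    (I J : Ideal (MvPolynomial (Fin n) K)) (hI : IsMonomialIdeal I) (hJ : IsMonomialIdeal J)
    (u : Fin n →₀ ℕ) (huJ : I = Ideal.span {(monomial u (1 : K) : MvPolynomial (Fin n) K)} * J)
    (hht : 2 ≤ idealHeight J) (hpc : IsPrettyClean J) : IsPrettyClean I :=
  prettyClean_of_monomial_mul_general I J u huJ hht hpc
end

section
/- Let K be a field, I ⊂ S₁ = K[x₁,…,x_m] and J ⊂ S₂ = K[x_{m+1},…,xₙ] monomial ideals, S = K[x₁,…,xₙ], Q₁ = (x₁,…,x_m), Q₂ = (x_{m+1},…,xₙ), and Q = (x_i x_j : 1 ≤ i ≤ m, m+1 ≤ j ≤ n). Then (I, J, Q) = (J, Q₁) ∩ (I, Q₂) as ideals of S. -/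
open MvPolynomial

variable {K : Type*} [Field K] {σ : Type*}

/-!
Let `π₁, π₂` be the retractions of `S` onto `S₁` and `S₂` that kill the variables of the other
block. Every `f` splits as `f = π₁ f + π₂ f - f(0) + g`, where `g` collects the monomials involving
variables of both blocks, so `g ∈ Q`. If `f ∈ (J, Q₁) ∩ (I, Q₂)`, then `π₁ f ∈ I` because `π₁` fixes
`I` and kills `Q₂`, likewise `π₂ f ∈ J`, and `f(0) = 0` because `I ⊆ Q₁`; hence `f ∈ (I, J, Q)`.
-/

namespace MvPolynomial

variable {R : Type*} [CommRing R]

theorem ker_constantCoeff_le_idealOfVars :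
    RingHom.ker (constantCoeff : MvPolynomial σ R →+* R) ≤ idealOfVars σ R := by
  intro g hg
  rw [← pow_one (idealOfVars σ R), mem_pow_idealOfVars_iff']
  intro x hx
  rw [Nat.lt_one_iff, Finsupp.degree_eq_zero_iff] at hx
  rwa [hx, ← constantCoeff_eq]

theorem span_X_image_le_ker_constantCoeff (s : Set σ) :
    Ideal.span (X '' s) ≤ RingHom.ker (constantCoeff : MvPolynomial σ R →+* R) := by
  rw [Ideal.span_le]
  rintro _ ⟨i, -, rfl⟩
  exact constantCoeff_X (R := R) i

theorem map_rename_le_span_X_range {τ : Type*} (f : τ → σ) {I : Ideal (MvPolynomial τ R)}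
    (hI : I ≤ RingHom.ker constantCoeff) :
    I.map (rename f) ≤ Ideal.span (X '' Set.range f) := by
  calc I.map (rename f) ≤ (idealOfVars τ R).map (rename f) :=
        Ideal.map_mono (hI.trans ker_constantCoeff_le_idealOfVars)
    _ = Ideal.span (X '' Set.range f) := by
        rw [idealOfVars, Ideal.map_span, ← Set.range_comp, ← Set.range_comp]
        congr! 2
        ext i
        simp

theorem map_killCompl_map_rename {τ : Type*} {f : τ → σ} (hf : Function.Injective f)
    (I : Ideal (MvPolynomial τ R)) : (I.map (rename f)).map (killCompl hf) = I := by
  rw [Ideal.map_mapₐ, killCompl_comp_rename]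
  exact Ideal.map_id I

theorem map_killCompl_span_X_compl_range {τ : Type*} {f : τ → σ} (hf : Function.Injective f) :
    (Ideal.span (X '' (Set.range f)ᶜ)).map (killCompl (R := R) hf) = ⊥ := by
  rw [Ideal.map_span, Ideal.span_eq_bot]
  rintro _ ⟨_, ⟨i, hi, rfl⟩, rfl⟩
  rw [killCompl, aeval_X, dif_neg hi]

theorem killCompl_mem_of_mem_map_rename_sup {τ : Type*} {f : τ → σ} (hf : Function.Injective f)
    {I : Ideal (MvPolynomial τ R)} {g : MvPolynomial σ R}
    (hg : g ∈ I.map (rename f) ⊔ Ideal.span (X '' (Set.range f)ᶜ)) : killCompl hf g ∈ I := by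
  simpa [Ideal.map_sup, map_killCompl_map_rename, map_killCompl_span_X_compl_range]
    using Ideal.mem_map_of_mem (killCompl hf) hg

theorem X_mul_X_dvd_monomial {i j : σ} {d : σ →₀ ℕ} (c : R) (hij : i ≠ j) (hi : d i ≠ 0)
    (hj : d j ≠ 0) : X i * X j ∣ monomial d c := by
  classical
  rw [X, X, monomial_mul, one_mul, monomial_dvd_monomial]
  refine ⟨Or.inr (Finsupp.le_def.2 fun k => ?_), one_dvd c⟩
  grind [Finsupp.add_apply]

variable (p : σ → Prop)

noncomputable def restrictVars : MvPolynomial σ R →ₐ[R] MvPolynomial σ R :=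
  (rename (Subtype.val : {i // p i} → σ)).comp (killCompl Subtype.val_injective)

variable {p}

theorem restrictVars_monomial_of_forall {d : σ →₀ ℕ} (c : R) (h : ∀ i ∈ d.support, p i) :
    restrictVars p (monomial d c) = monomial d c := by
  have hd : ↑d.support ⊆ Set.range (Subtype.val : {i // p i} → σ) := by
    simpa [Set.subset_def] using h
  rw [restrictVars, AlgHom.comp_apply,
    killCompl_monomial_eq_monomial_comapDomain_of_subset _ _ hd, rename_monomial,
    Finsupp.mapDomain_comapDomain _ Subtype.val_injective _ hd]

theorem restrictVars_monomial_of_exists {d : σ →₀ ℕ} (c : R) (h : ∃ i ∈ d.support, ¬ p i) :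
    restrictVars p (monomial d c) = 0 := by
  obtain ⟨i, hi, hpi⟩ := h
  rw [restrictVars, AlgHom.comp_apply,
    killCompl_monomial_eq_zero_of_notMem_range _ c hi (by simpa using hpi), map_zero]

variable (p) in
noncomputable def mixedIdeal : Ideal (MvPolynomial σ R) :=
  Ideal.span {g | ∃ i j, p i ∧ ¬ p j ∧ g = X i * X j}

theorem sub_restrictVars_sub_restrictVars_add_mem_mixedIdeal (f : MvPolynomial σ R) :
    f - restrictVars p f - restrictVars (¬ p ·) f + C (constantCoeff f) ∈ mixedIdeal p := by
  induction f using MvPolynomial.induction_on' with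
  | add f g hf hg =>
    convert add_mem hf hg using 1
    simp only [map_add]
    ring
  | monomial d c =>
    classical
    by_cases hA : ∀ i ∈ d.support, p i <;> by_cases hB : ∀ i ∈ d.support, ¬ p i
    · obtain rfl : d = 0 := by
        ext i
        by_contra hi
        exact hB i (Finsupp.mem_support_iff.2 hi) (hA i (Finsupp.mem_support_iff.2 hi))
      simp
    · push Not at hB
      have hd : d ≠ 0 := by rintro rfl; simp at hB
      rw [restrictVars_monomial_of_forall c hA,
        restrictVars_monomial_of_exists c (by simpa using hB), constantCoeff_monomial, if_neg hd]
      simp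
    · push Not at hA
      have hd : d ≠ 0 := by rintro rfl; simp at hA
      rw [restrictVars_monomial_of_exists c hA, restrictVars_monomial_of_forall c hB,
        constantCoeff_monomial, if_neg hd]
      simp
    · push Not at hA hB
      obtain ⟨i, hi, hpi⟩ := hB
      obtain ⟨j, hj, hpj⟩ := hA
      have hd : d ≠ 0 := by rintro rfl; simp at hi
      rw [restrictVars_monomial_of_exists c ⟨j, hj, hpj⟩,
        restrictVars_monomial_of_exists c ⟨i, hi, not_not.2 hpi⟩, constantCoeff_monomial,
        if_neg hd]
      simp only [sub_zero, map_zero, add_zero]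
      have hij : i ≠ j := ne_of_apply_ne p (by simp [hpi, hpj])
      exact Ideal.mem_of_dvd _ (X_mul_X_dvd_monomial c hij (Finsupp.mem_support_iff.1 hi)
        (Finsupp.mem_support_iff.1 hj)) (Ideal.subset_span ⟨i, j, hpi, hpj, rfl⟩)

theorem setOf_exists_and_eq_X :
    {g : MvPolynomial σ R | ∃ i, p i ∧ g = X i} = X '' {i | p i} := by
  ext g
  simp [eq_comm]

theorem mixedIdeal_le_span_X_image : mixedIdeal (R := R) p ≤ Ideal.span (X '' {i | p i}) := by
  rw [mixedIdeal, Ideal.span_le]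
  rintro _ ⟨i, j, hi, -, rfl⟩
  exact Ideal.mul_mem_right _ _ (Ideal.subset_span ⟨i, hi, rfl⟩)

theorem mixedIdeal_le_span_X_image_compl :
    mixedIdeal (R := R) p ≤ Ideal.span (X '' {i | ¬ p i}) := by
  rw [mixedIdeal, Ideal.span_le]
  rintro _ ⟨i, j, -, hj, rfl⟩
  exact Ideal.mul_mem_left _ _ (Ideal.subset_span ⟨j, hj, rfl⟩)

theorem restrictVars_mem_map_rename_of_mem_sup {I : Ideal (MvPolynomial {i // p i} R)}
    {f : MvPolynomial σ R}
    (hf : f ∈ I.map (rename Subtype.val) ⊔ Ideal.span (X '' {i | ¬ p i})) :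
    restrictVars p f ∈ I.map (rename Subtype.val) :=
  Ideal.mem_map_of_mem _ <| killCompl_mem_of_mem_map_rename_sup _ <| by
    simpa only [Subtype.range_coe_subtype, Set.compl_ofPred] using hf

theorem inf_le_map_rename_sup_map_rename_sup_mixedIdeal
    {I : Ideal (MvPolynomial {i // p i} R)} {J : Ideal (MvPolynomial {i // ¬ p i} R)}
    (hI : I ≤ RingHom.ker constantCoeff) :
    (J.map (rename Subtype.val) ⊔ Ideal.span (X '' {i | p i})) ⊓
        (I.map (rename Subtype.val) ⊔ Ideal.span (X '' {i | ¬ p i})) ≤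
      I.map (rename Subtype.val) ⊔ J.map (rename Subtype.val) ⊔ mixedIdeal p := by
  intro f hf
  obtain ⟨hfJ, hfI⟩ := Ideal.mem_inf.1 hf
  have hf₀ : constantCoeff f = 0 := by
    refine sup_le ?_ (span_X_image_le_ker_constantCoeff _) hfI
    simpa using (map_rename_le_span_X_range Subtype.val hI).trans
      (span_X_image_le_ker_constantCoeff _)
  have hmixed := sub_restrictVars_sub_restrictVars_add_mem_mixedIdeal (p := p) f
  rw [hf₀, map_zero, add_zero] at hmixed
  have hsplit : f = restrictVars p f + restrictVars (¬ p ·) f +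
      (f - restrictVars p f - restrictVars (¬ p ·) f) := by ring
  rw [hsplit]
  refine add_mem (add_mem ?_ ?_) (Ideal.mem_sup_right hmixed)
  · exact Ideal.mem_sup_left (Ideal.mem_sup_left (restrictVars_mem_map_rename_of_mem_sup hfI))
  · refine Ideal.mem_sup_left (Ideal.mem_sup_right (restrictVars_mem_map_rename_of_mem_sup ?_))
    simpa only [not_not] using hfJ

theorem map_rename_sup_map_rename_sup_mixedIdeal_eq_inf
    {I : Ideal (MvPolynomial {i // p i} R)} {J : Ideal (MvPolynomial {i // ¬ p i} R)}
    (hI : I ≤ RingHom.ker constantCoeff) (hJ : J ≤ RingHom.ker constantCoeff) :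
    I.map (rename Subtype.val) ⊔ J.map (rename Subtype.val) ⊔ mixedIdeal p =
      (J.map (rename Subtype.val) ⊔ Ideal.span (X '' {i | p i})) ⊓
        (I.map (rename Subtype.val) ⊔ Ideal.span (X '' {i | ¬ p i})) := by
  have hI₁ : I.map (rename Subtype.val) ≤ Ideal.span (X '' {i | p i}) := by
    simpa using map_rename_le_span_X_range Subtype.val hI
  have hJ₂ : J.map (rename Subtype.val) ≤ Ideal.span (X '' {i | ¬ p i}) := by
    simpa using map_rename_le_span_X_range Subtype.val hJ
  refine le_antisymm (sup_le (sup_le ?_ ?_) (le_inf ?_ ?_))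
    (inf_le_map_rename_sup_map_rename_sup_mixedIdeal hI)
  · exact le_inf (hI₁.trans le_sup_right) le_sup_left
  · exact le_inf le_sup_left (hJ₂.trans le_sup_right)
  · exact mixedIdeal_le_span_X_image.trans le_sup_right
  · exact mixedIdeal_le_span_X_image_compl.trans le_sup_right

end MvPolynomial

theorem IsMonomialIdeal.le_ker_constantCoeff {I : Ideal (MvPolynomial σ K)}
    (hI : IsMonomialIdeal I) (hI_ne_top : I ≠ ⊤) : I ≤ RingHom.ker MvPolynomial.constantCoeff := by
  obtain ⟨G, rfl⟩ := hI
  rw [Ideal.span_le]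
  rintro _ ⟨d, hd, rfl⟩
  have hd0 : d ≠ 0 := by
    rintro rfl
    exact hI_ne_top (Ideal.eq_top_of_isUnit_mem _ (Ideal.subset_span ⟨0, hd, rfl⟩) (by simp))
  classical
  simp [constantCoeff_monomial, hd0]

theorem sum_with_mixed_products_eq_inter_general {K : Type*} [Field K] (m n : ℕ)
    (I : Ideal (MvPolynomial {i : Fin n // (i : ℕ) < m} K))
    (J : Ideal (MvPolynomial {i : Fin n // ¬ (i : ℕ) < m} K))
    (hI : IsMonomialIdeal I) (hJ : IsMonomialIdeal J)
    (hIproper : I ≠ ⊤) (hJproper : J ≠ ⊤)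
    (Q₁ Q₂ Q : Ideal (MvPolynomial (Fin n) K))
    (hQ₁ : Q₁ = Ideal.span {f : MvPolynomial (Fin n) K | ∃ i : Fin n, (i : ℕ) < m ∧ f = X i})
    (hQ₂ : Q₂ = Ideal.span {f : MvPolynomial (Fin n) K | ∃ j : Fin n, ¬ (j : ℕ) < m ∧ f = X j})
    (hQ : Q = Ideal.span {f : MvPolynomial (Fin n) K |
      ∃ i j : Fin n, (i : ℕ) < m ∧ ¬ (j : ℕ) < m ∧ f = X i * X j}) :
    Ideal.map (rename (Subtype.val : {i : Fin n // (i : ℕ) < m} → Fin n)) I ⊔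
      Ideal.map (rename (Subtype.val : {i : Fin n // ¬ (i : ℕ) < m} → Fin n)) J ⊔ Q =
    (Ideal.map (rename (Subtype.val : {i : Fin n // ¬ (i : ℕ) < m} → Fin n)) J ⊔ Q₁) ⊓
      (Ideal.map (rename (Subtype.val : {i : Fin n // (i : ℕ) < m} → Fin n)) I ⊔ Q₂) := by
  subst hQ₁ hQ₂ hQ
  rw [setOf_exists_and_eq_X, setOf_exists_and_eq_X]
  exact map_rename_sup_map_rename_sup_mixedIdeal_eq_inf (hI.le_ker_constantCoeff hIproper)
    (hJ.le_ker_constantCoeff hJproper)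

/-- from the proof of Proposition 2.9: For proper monomial ideals
`I ⊂ S₁ = K[x₁,…,x_m]` and `J ⊂ S₂ = K[x_{m+1},…,xₙ]`, one has
`(I, J, Q) = (J, Q₁) ∩ (I, Q₂)` in `S = K[x₁,…,xₙ]`, where `Q₁ = (x₁,…,x_m)`,
`Q₂ = (x_{m+1},…,xₙ)` and `Q = (x_i x_j : i ≤ m < j)`. -/
theorem sum_with_mixed_products_eq_inter {K : Type*} [Field K] (m n : ℕ) (hmn : m ≤ n)
    (I : Ideal (MvPolynomial {i : Fin n // (i : ℕ) < m} K))
    (J : Ideal (MvPolynomial {i : Fin n // ¬ (i : ℕ) < m} K))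
    (hI : IsMonomialIdeal I) (hJ : IsMonomialIdeal J)
    (hIproper : I ≠ ⊤) (hJproper : J ≠ ⊤)
    (Q₁ Q₂ Q : Ideal (MvPolynomial (Fin n) K))
    (hQ₁ : Q₁ = Ideal.span {f : MvPolynomial (Fin n) K | ∃ i : Fin n, (i : ℕ) < m ∧ f = X i})
    (hQ₂ : Q₂ = Ideal.span {f : MvPolynomial (Fin n) K | ∃ j : Fin n, ¬ (j : ℕ) < m ∧ f = X j})
    (hQ : Q = Ideal.span {f : MvPolynomial (Fin n) K |
      ∃ i j : Fin n, (i : ℕ) < m ∧ ¬ (j : ℕ) < m ∧ f = X i * X j}) :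
    Ideal.map (rename (Subtype.val : {i : Fin n // (i : ℕ) < m} → Fin n)) I ⊔
      Ideal.map (rename (Subtype.val : {i : Fin n // ¬ (i : ℕ) < m} → Fin n)) J ⊔ Q =
    (Ideal.map (rename (Subtype.val : {i : Fin n // ¬ (i : ℕ) < m} → Fin n)) J ⊔ Q₁) ⊓
      (Ideal.map (rename (Subtype.val : {i : Fin n // (i : ℕ) < m} → Fin n)) I ⊔ Q₂) :=
  sum_with_mixed_products_eq_inter_general m n I J hI hJ hIproper hJproper Q₁ Q₂ Q hQ₁ hQ₂ hQ
end

section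
/- Let K be a field, T = K[u,v,w,x,y,z], and L = (uxy, vxz, wyz). Then L = (x,y) ∩ (x,z) ∩ (x,w) ∩ (y,z) ∩ (y,v) ∩ (z,u) ∩ (u,v,w). -/
open MvPolynomial

variable {K : Type*} [Field K] {σ : Type*}

/-!
A polynomial lies in the ideal generated by the squarefree monomials `∏ i ∈ t, X i`, `t ∈ G`, iff
the support of each of its monomials contains some `t ∈ G`, and it lies in the prime
`(X i : i ∈ C)` iff each of these supports meets `C`. A finite set `S` contains an edge of the
hypergraph `G` iff it meets every minimal vertex cover of `G`: if `S` contains no edge, its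
complement is a vertex cover and so contains a minimal one, disjoint from `S`. For
`G = {uxy, vxz, wyz}` the minimal vertex covers are
`{x,y}, {x,z}, {x,w}, {y,z}, {y,v}, {z,u}, {u,v,w}`.
-/

theorem Finsupp.sum_single_one_le_iff {t : Finset σ} {m : σ →₀ ℕ} :
    ∑ i ∈ t, Finsupp.single i 1 ≤ m ↔ t ⊆ m.support := by
  classical
  simp only [Finsupp.le_def, Finsupp.finsetSum_apply, Finsupp.single_apply, Finset.sum_ite_eq']
  refine ⟨fun h i hi => ?_, fun h i => ?_⟩
  · simpa [hi, Nat.one_le_iff_ne_zero] using h i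
  · split_ifs with hi
    · exact Nat.one_le_iff_ne_zero.2 (Finsupp.mem_support_iff.1 (h hi))
    · exact Nat.zero_le _

namespace MvPolynomial

variable {R : Type*} [CommSemiring R]

theorem mem_ideal_span_prod_X_image {f : MvPolynomial σ R} {G : Set (Finset σ)} :
    f ∈ Ideal.span ((fun t => ∏ i ∈ t, X i) '' G) ↔ ∀ m ∈ f.support, ∃ t ∈ G, t ⊆ m.support := by
  have hprod : (fun t : Finset σ => ∏ i ∈ t, (X i : MvPolynomial σ R)) =
      (fun d => monomial d 1) ∘ fun t => ∑ i ∈ t, Finsupp.single i 1 := by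
    ext1 t
    exact (monomial_sum_one t _).symm
  simp only [hprod, Set.image_comp, mem_ideal_span_monomial_image, Set.exists_mem_image,
    Finsupp.sum_single_one_le_iff]

theorem mem_iInf_span_X_image {f : MvPolynomial σ R} {𝒞 : Finset (Finset σ)} :
    f ∈ ⨅ C ∈ 𝒞, Ideal.span (X '' (C : Set σ)) ↔
      ∀ m ∈ f.support, ∀ C ∈ 𝒞, ¬ Disjoint C m.support := by
  simp only [Submodule.mem_iInf, mem_ideal_span_X_image, Finset.not_disjoint_iff,
    Finsupp.mem_support_iff, Finset.mem_coe]
  exact forall₂_comm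

variable {G 𝒞 : Finset (Finset σ)}

theorem exists_subset_iff_forall_not_disjoint (hcover : ∀ C ∈ 𝒞, ∀ t ∈ G, ¬ Disjoint C t)
    (hindep : ∀ S : Finset σ, (∀ t ∈ G, ¬ t ⊆ S) → ∃ C ∈ 𝒞, Disjoint C S) (S : Finset σ) :
    (∃ t ∈ G, t ⊆ S) ↔ ∀ C ∈ 𝒞, ¬ Disjoint C S := by
  constructor
  · rintro ⟨t, ht, htS⟩ C hC hCS
    exact hcover C hC t ht (hCS.mono_right htS)
  · intro hmeet
    by_contra! hnone
    obtain ⟨C, hC, hCS⟩ := hindep S hnone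
    exact hmeet C hC hCS

theorem span_prod_X_eq_iInf_span_X (hcover : ∀ C ∈ 𝒞, ∀ t ∈ G, ¬ Disjoint C t)
    (hindep : ∀ S : Finset σ, (∀ t ∈ G, ¬ t ⊆ S) → ∃ C ∈ 𝒞, Disjoint C S) :
    Ideal.span ((fun t => ∏ i ∈ t, X i) '' (G : Set (Finset σ))) =
      ⨅ C ∈ 𝒞, Ideal.span (X '' (C : Set σ) : Set (MvPolynomial σ R)) := by
  ext f
  rw [mem_ideal_span_prod_X_image, mem_iInf_span_X_image]
  exact forall₂_congr fun m _ => exists_subset_iff_forall_not_disjoint hcover hindep m.support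

end MvPolynomial

/-- Here `u = X 0, v = X 1, w = X 2, x = X 3, y = X 4, z = X 5`. -/
theorem L_eq_inter_primes {K : Type*} [Field K] :
    (Ideal.span {X 0 * X 3 * X 4, X 1 * X 3 * X 5, X 2 * X 4 * X 5} :
        Ideal (MvPolynomial (Fin 6) K)) =
      Ideal.span {X 3, X 4} ⊓ Ideal.span {X 3, X 5} ⊓ Ideal.span {X 3, X 2} ⊓
        Ideal.span {X 4, X 5} ⊓ Ideal.span {X 4, X 1} ⊓ Ideal.span {X 5, X 0} ⊓
        Ideal.span {X 0, X 1, X 2} := by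
  have h := span_prod_X_eq_iInf_span_X (R := K) (σ := Fin 6)
    (G := {{0, 3, 4}, {1, 3, 5}, {2, 4, 5}})
    (𝒞 := {{3, 4}, {3, 5}, {3, 2}, {4, 5}, {4, 1}, {5, 0}, {0, 1, 2}})
    (by decide +kernel) (by decide +kernel)
  simp only [Finset.coe_insert, Finset.coe_singleton, Set.image_insert_eq, Set.image_singleton,
    Finset.iInf_insert, Finset.iInf_singleton] at h
  simpa [Finset.prod_insert, mul_assoc, inf_assoc] using h
end

section
/- Let K be a field and T = K[u,v,w,x,y,z]. The ideal (xy, xz, xw, yz, yv, zu, uvw) of T, which equals the Alexander dual L^∨ of L = (uxy, vxz, wyz), has linear quotients with respect to the order xy, xz, xw, yz, yv, zu, uvw. -/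
open MvPolynomial

variable {K : Type*} [Field K] {σ : Type*}

/-!
A prime `P_s` spanned by a set `s` of variables contains the square-free monomial ideal generated
by the products over a family of finite sets exactly when `s` meets each of these sets. Hence the
minimal primes of `L` are the `P_s` for the minimal vertex covers `s` of `{uxy, vxz, wyz}`, and
these are the supports of the seven listed monomials.

For the colon ideals, let `t` be the set of variables `x_a` with `x_a u_i ∈ (u_1, …, u_{i-1})`.
Checking that each earlier `u_j` involves a variable of `t` while `u_i` involves none gives
`(u_1, …, u_{i-1}) ⊆ P_t ∌ u_i`, so the colon ideal lies in the prime `P_t`, and it contains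
`P_t` by the choice of `t`.
-/

theorem Ideal.colon_span_singleton_eq_of_isPrime {R : Type*} [CommRing R] {I P : Ideal R}
    [hP : P.IsPrime] {m : R} (hIP : I ≤ P) (hm : m ∉ P) (hPI : ∀ r ∈ P, r * m ∈ I) :
    I.colon (Ideal.span {m}) = P :=
  le_antisymm
    (fun _ hr => (hP.mem_or_mem (hIP (Ideal.mem_colon_span_singleton.mp hr))).resolve_right hm)
    (fun r hr => Ideal.mem_colon_span_singleton.mpr (hPI r hr))

def IsVertexCover (𝓕 : Set (Finset σ)) (s : Set σ) : Prop :=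
  ∀ F ∈ 𝓕, ∃ i ∈ F, i ∈ s

theorem IsVertexCover.mono {𝓕 : Set (Finset σ)} {s t : Set σ} (hs : IsVertexCover 𝓕 s)
    (hst : s ⊆ t) : IsVertexCover 𝓕 t :=
  fun F hF => (hs F hF).imp fun _ => And.imp_right (@hst _)

namespace MvPolynomial

variable {R : Type*} [CommRing R]

open Classical in
theorem ker_aeval_ite_eq_span_X_image (s : Set σ) :
    RingHom.ker (aeval (fun i => if i ∈ s then 0 else X i) :
        MvPolynomial σ R →ₐ[R] MvPolynomial σ R) = Ideal.span (X '' s) := by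
  set φ : MvPolynomial σ R →ₐ[R] MvPolynomial σ R := aeval fun i => if i ∈ s then 0 else X i
  have sub_mem : ∀ f, f - φ f ∈ Ideal.span (X '' s) := by
    intro f
    induction f using MvPolynomial.induction_on with
    | C a => simp [φ]
    | add p q hp hq => simpa [add_sub_add_comm] using Ideal.add_mem _ hp hq
    | mul_X p i hp =>
      by_cases hi : i ∈ s
      · simpa [φ, hi] using Ideal.mul_mem_left _ p (Ideal.subset_span (Set.mem_image_of_mem X hi))
      · simpa [φ, hi, sub_mul] using Ideal.mul_mem_right (X i) _ hp
  refine le_antisymm (fun f hf => ?_) ?_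
  · simpa [RingHom.mem_ker.mp hf] using sub_mem f
  · rw [Ideal.span_le]
    rintro _ ⟨i, hi, rfl⟩
    simp [φ, hi]

theorem X_mem_span_X_image_iff [Nontrivial R] {s : Set σ} {i : σ} :
    (X i : MvPolynomial σ R) ∈ Ideal.span (X '' s) ↔ i ∈ s := by
  simp [mem_ideal_span_X_image, support_X, Finsupp.single_apply_eq_zero]

theorem span_X_image_le_span_X_image_iff [Nontrivial R] {s t : Set σ} :
    Ideal.span (X '' s : Set (MvPolynomial σ R)) ≤ Ideal.span (X '' t) ↔ s ⊆ t := by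
  simp [Ideal.span_le, Set.subset_def, X_mem_span_X_image_iff]

theorem prod_X_dvd_X_mul_prod_X [DecidableEq σ] {F G : Finset σ} {a : σ} (h : F ⊆ insert a G) :
    ∏ i ∈ F, (X i : MvPolynomial σ R) ∣ X a * ∏ i ∈ G, X i := by
  by_cases ha : a ∈ G
  · exact (Finset.prod_dvd_prod_of_subset _ _ _ (Finset.insert_eq_of_mem ha ▸ h)).mul_left _
  · rw [← Finset.prod_insert ha]
    exact Finset.prod_dvd_prod_of_subset _ _ _ h

theorem isVertexCover_of_span_prod_X_le {𝓕 : Set (Finset σ)} {p : Ideal (MvPolynomial σ R)}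
    [p.IsPrime] (hp : Ideal.span ((fun F => ∏ i ∈ F, (X i : MvPolynomial σ R)) '' 𝓕) ≤ p) :
    IsVertexCover 𝓕 {i | X i ∈ p} :=
  fun F hF => Ideal.IsPrime.prod_mem_iff.mp (hp (Ideal.subset_span ⟨F, hF, rfl⟩))

variable [IsDomain R]

theorem isPrime_span_X_image (s : Set σ) :
    (Ideal.span (X '' s : Set (MvPolynomial σ R))).IsPrime :=
  ker_aeval_ite_eq_span_X_image (R := R) s ▸ RingHom.ker_isPrime _

theorem prod_X_mem_span_X_image_iff {s : Set σ} {F : Finset σ} :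
    ∏ i ∈ F, (X i : MvPolynomial σ R) ∈ Ideal.span (X '' s) ↔ ∃ i ∈ F, i ∈ s := by
  have := isPrime_span_X_image (R := R) s
  simp [Ideal.IsPrime.prod_mem_iff, X_mem_span_X_image_iff]

theorem span_prod_X_le_span_X_image_iff {𝓕 : Set (Finset σ)} {s : Set σ} :
    Ideal.span ((fun F => ∏ i ∈ F, (X i : MvPolynomial σ R)) '' 𝓕) ≤ Ideal.span (X '' s) ↔
      IsVertexCover 𝓕 s := by
  simp [Ideal.span_le, Set.subset_def, prod_X_mem_span_X_image_iff, IsVertexCover]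

theorem span_X_image_mem_minimalPrimes_iff {𝓕 : Set (Finset σ)} {s : Set σ} :
    Ideal.span (X '' s) ∈
        (Ideal.span ((fun F => ∏ i ∈ F, (X i : MvPolynomial σ R)) '' 𝓕)).minimalPrimes ↔
      Minimal (IsVertexCover 𝓕) s := by
  refine ⟨fun ⟨⟨_, hle⟩, hmin⟩ => ⟨span_prod_X_le_span_X_image_iff.mp hle, fun t ht hts => ?_⟩,
    fun ⟨hs, hmin⟩ => ⟨⟨isPrime_span_X_image s, span_prod_X_le_span_X_image_iff.mpr hs⟩,
      fun q ⟨_, hq⟩ hqs => ?_⟩⟩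
  · rw [← span_X_image_le_span_X_image_iff (R := R)] at hts ⊢
    exact hmin ⟨isPrime_span_X_image t, span_prod_X_le_span_X_image_iff.mpr ht⟩ hts
  · -- a prime `q` contains the prime spanned by the variables it contains, a vertex cover
    have hsub : {i | X i ∈ q} ⊆ s := fun i hi => X_mem_span_X_image_iff.mp (hqs hi)
    have hs_le := hmin (isVertexCover_of_span_prod_X_le hq) hsub
    rw [Ideal.span_le]
    rintro _ ⟨i, hi, rfl⟩
    exact hs_le hi

/-- `G k ⊆ insert a (G i)` says that `∏ l ∈ G k, X l` divides `X a * ∏ l ∈ G i, X l`. -/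
theorem colon_span_prod_X_eq_span_X_image [DecidableEq σ] {ι : Type*} (G : ι → Finset σ)
    (J : Set ι) (i : ι) (hirred : ∀ j ∈ J, ¬ G j ⊆ G i)
    (hlin : ∀ j ∈ J, ∃ a ∈ G j, ∃ k ∈ J, G k ⊆ insert a (G i)) :
    Submodule.colon (Ideal.span ((fun j => ∏ l ∈ G j, (X l : MvPolynomial σ R)) '' J))
        (Ideal.span {∏ l ∈ G i, (X l : MvPolynomial σ R)}) =
      Ideal.span (X '' {a | ∃ k ∈ J, G k ⊆ insert a (G i)}) := by
  have := isPrime_span_X_image (R := R) {a | ∃ k ∈ J, G k ⊆ insert a (G i)}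
  refine Ideal.colon_span_singleton_eq_of_isPrime ?_ ?_ fun r hr => ?_
  · rw [Ideal.span_le]
    rintro _ ⟨j, hj, rfl⟩
    exact prod_X_mem_span_X_image_iff.mpr (hlin j hj)
  · rw [prod_X_mem_span_X_image_iff]
    rintro ⟨a, ha, k, hk, hsub⟩
    exact hirred k hk (Finset.insert_eq_of_mem ha ▸ hsub)
  · induction hr using Submodule.span_induction with
    | mem _ h =>
      obtain ⟨a, ⟨k, hk, hsub⟩, rfl⟩ := h
      exact Ideal.mem_of_dvd _ (prod_X_dvd_X_mul_prod_X hsub) (Ideal.subset_span ⟨k, hk, rfl⟩)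
    | zero => simp
    | add x y _ _ hx hy => simpa [add_mul] using Ideal.add_mem _ hx hy
    | smul c x _ hx => simpa [mul_assoc] using Ideal.mul_mem_left _ c hx

end MvPolynomial

theorem alexanderDual_span_prod_X (𝓕 : Set (Finset σ)) :
    alexanderDual (Ideal.span ((fun F => ∏ i ∈ F, (X i : MvPolynomial σ K)) '' 𝓕)) =
      Ideal.span ((fun s => ∏ i ∈ s, (X i : MvPolynomial σ K)) ''
        {s : Finset σ | Minimal (IsVertexCover 𝓕) ↑s}) := by
  simp only [alexanderDual, span_X_image_mem_minimalPrimes_iff]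

def edgesL : Set (Finset (Fin 6)) := {{0, 3, 4}, {1, 3, 5}, {2, 4, 5}}

def coversL : Fin 7 → Finset (Fin 6) := ![{3, 4}, {3, 5}, {3, 2}, {4, 5}, {4, 1}, {5, 0}, {0, 1, 2}]

theorem isVertexCover_edgesL_iff (s : Set (Fin 6)) :
    IsVertexCover edgesL s ↔ (0 ∈ s ∨ 3 ∈ s ∨ 4 ∈ s) ∧ (1 ∈ s ∨ 3 ∈ s ∨ 5 ∈ s) ∧
      (2 ∈ s ∨ 4 ∈ s ∨ 5 ∈ s) := by
  simp [IsVertexCover, edgesL]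

theorem setOf_minimal_isVertexCover_edgesL :
    {s : Finset (Fin 6) | Minimal (IsVertexCover edgesL) ↑s} = Set.range coversL := by
  ext s
  simp only [Set.mem_ofPred_eq, Set.minimal_iff_forall_sdiff_singleton
    (fun _ _ ht hts => IsVertexCover.mono ht hts), isVertexCover_edgesL_iff, Set.mem_sdiff,
    Finset.mem_coe, Set.mem_singleton_iff, Set.mem_range]
  revert s
  decide

theorem span_edgesL :
    Ideal.span ((fun F => ∏ i ∈ F, (X i : MvPolynomial (Fin 6) K)) '' edgesL) =
      Ideal.span {X 0 * X 3 * X 4, X 1 * X 3 * X 5, X 2 * X 4 * X 5} := by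
  simp [edgesL, Set.image_insert_eq, mul_assoc]

theorem prod_coversL :
    (fun k => ∏ i ∈ coversL k, (X i : MvPolynomial (Fin 6) K)) =
      ![X 3 * X 4, X 3 * X 5, X 3 * X 2, X 4 * X 5, X 4 * X 1, X 5 * X 0, X 0 * X 1 * X 2] := by
  funext k
  fin_cases k <;> simp [coversL, mul_assoc]

theorem coversL_irredundant : ∀ i j : Fin 7, j < i → ¬ coversL j ⊆ coversL i := by
  decide

theorem coversL_linearQuotients :
    ∀ i j : Fin 7, j < i → ∃ a ∈ coversL j, ∃ k < i, coversL k ⊆ insert a (coversL i) := by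
  decide

/-- Here `u = X 0, v = X 1, w = X 2, x = X 3, y = X 4, z = X 5`. -/
theorem dual_L_has_linearQuotients {K : Type*} [Field K]
    (g : Fin 7 → MvPolynomial (Fin 6) K)
    (hg : g = ![X 3 * X 4, X 3 * X 5, X 3 * X 2, X 4 * X 5, X 4 * X 1, X 5 * X 0,
      X 0 * X 1 * X 2]) :
    alexanderDual (Ideal.span {X 0 * X 3 * X 4, X 1 * X 3 * X 5, X 2 * X 4 * X 5} :
        Ideal (MvPolynomial (Fin 6) K)) = Ideal.span (Set.range g) ∧
    ∀ i : Fin 7, 0 < (i : ℕ) →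
      ∃ s : Set (Fin 6),
        Submodule.colon (Ideal.span (g '' {j : Fin 7 | (j : ℕ) < (i : ℕ)}))
            (Ideal.span {g i}) =
          Ideal.span ((fun i => (X i : MvPolynomial (Fin 6) K)) '' s) := by
  rw [← prod_coversL] at hg
  subst hg
  refine ⟨?_, fun i _ => ⟨_, colon_span_prod_X_eq_span_X_image coversL _ i ?_ ?_⟩⟩
  · rw [← span_edgesL, alexanderDual_span_prod_X, setOf_minimal_isVertexCover_edgesL,
      ← Set.range_comp]
    rfl
  · exact coversL_irredundant i
  · exact coversL_linearQuotients i
end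

section
/- Let K be a field. Then K[x,y]/(x², xy) is not clean, although (x², xy) is an almost complete intersection monomial ideal of K[x,y]. -/
open MvPolynomial

variable {K : Type*} [Field K] {σ : Type*}

/-! Along a clean filtration every factor is `S/𝔭` with `𝔭` a minimal prime of `I`, so an element
lying outside all minimal primes of `I` is a nonzerodivisor on `S/I`: clean quotients have no
embedded primes. The only minimal prime of `(x², xy)` is `(x)`, yet `y · x ∈ (x², xy)` while
`x ∉ (x², xy)`. The exponents of `x²` and `xy` are incomparable, so `μ = 2`, and the height is
that of `(x)`, which is `1` by Krull's principal ideal theorem. -/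

theorem idealHeight_eq_height {R : Type*} [CommRing R] (I : Ideal R) :
    idealHeight I = I.height := by
  rw [Ideal.height_eq_inf_minimalPrimes]
  refine le_antisymm (le_iInf₂ fun p hp => sInf_le ⟨⟨p, hp.1.1⟩, hp.1.2, ?_⟩) (le_sInf ?_)
  · exact PrimeSpectrum.height_eq_orderHeight ⟨p, hp.1.1⟩
  · rintro _ ⟨p, hIp, rfl⟩
    obtain ⟨q, hq, hqp⟩ := Ideal.exists_minimalPrimes_le hIp
    rw [← PrimeSpectrum.height_eq_orderHeight]
    exact (iInf₂_le q hq).trans (Ideal.height_mono hqp)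

theorem monomial_one_mem_span_monomial_one_iff {G : Set (σ →₀ ℕ)} {d : σ →₀ ℕ} :
    monomial d (1 : K) ∈ Ideal.span ((fun g => monomial g (1 : K)) '' G) ↔ ∃ g ∈ G, g ≤ d := by
  classical
  simp only [mem_ideal_span_monomial_image, support_monomial, one_ne_zero, if_false,
    Finset.mem_singleton, forall_eq]

theorem minimalMonomialGens_span_monomial_one {G : Set (σ →₀ ℕ)} (hG : IsAntichain (· ≤ ·) G) :
    minimalMonomialGens (Ideal.span ((fun g => monomial g (1 : K)) '' G)) =
      (fun g => monomial g (1 : K)) '' G := by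
  ext f
  simp only [minimalMonomialGens, monomial_one_mem_span_monomial_one_iff, Set.mem_ofPred_eq,
    Set.mem_image]
  constructor
  · rintro ⟨d, rfl, ⟨g, hg, hgd⟩, hmin⟩
    obtain rfl | hlt := hgd.eq_or_lt
    · exact ⟨g, hg, rfl⟩
    · exact absurd ⟨g, hg, le_rfl⟩ (hmin g hlt)
  · rintro ⟨d, hd, rfl⟩
    refine ⟨d, rfl, ⟨d, hd, le_rfl⟩, fun e hed ⟨g, hg, hge⟩ => ?_⟩
    exact hG.not_lt hg hd (hge.trans_lt hed)

theorem mu_span_monomial_one {G : Set (σ →₀ ℕ)} (hG : IsAntichain (· ≤ ·) G) :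
    mu (Ideal.span ((fun g => monomial g (1 : K)) '' G)) = G.ncard := by
  rw [mu, minimalMonomialGens_span_monomial_one hG,
    Set.ncard_image_of_injective _ (monomial_left_injective one_ne_zero)]

theorem Ideal.mem_of_mul_mem_of_chain {R : Type*} [CommRing R] {r : ℕ}
    {F : Fin (r + 1) → Ideal R} (htop : F (Fin.last r) = ⊤)
    (hmono : ∀ i : Fin r, F i.castSucc ≤ F i.succ) {a : R}
    (hreg : ∀ i : Fin r,
      IsSMulRegular (↥(F i.succ) ⧸ Submodule.comap (F i.succ).subtype (F i.castSucc)) a)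
    {f : R} (hf : a * f ∈ F 0) : f ∈ F 0 := by
  suffices ∀ j, a * f ∈ F j → f ∈ F j from this 0 hf
  refine Fin.reverseInduction (fun _ => htop ▸ Submodule.mem_top) (fun i ih hi => ?_)
  have hf' : f ∈ F i.succ := ih (hmono i hi)
  exact mem_of_isSMulRegular_quotient_of_smul_mem (x := ⟨f, hf'⟩) (hreg i) hi

theorem IsClean.mem_of_mul_mem {I : Ideal (MvPolynomial σ K)} (hI : IsClean I)
    {a : MvPolynomial σ K} (ha : ∀ p ∈ I.minimalPrimes, a ∉ p) {f : MvPolynomial σ K}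
    (hf : a * f ∈ I) : f ∈ I := by
  obtain ⟨r, F, p, -, rfl, htop, hlt, hstep⟩ := hI
  refine Ideal.mem_of_mul_mem_of_chain htop (fun i => (hlt i).le) (fun i => ?_) hf
  obtain ⟨-, hp, ⟨e⟩⟩ := hstep i
  refine (e.isSMulRegular_congr a).mpr ((isSMulRegular_quotient_iff_mem_of_smul_mem _ a).mpr ?_)
  exact fun x hx => (hp.1.1.mem_or_mem hx).resolve_left (ha _ hp)

theorem isPrime_span_X (i : σ) : (Ideal.span {(X i : MvPolynomial σ K)}).IsPrime :=
  (Ideal.span_singleton_prime (X_ne_zero i)).mpr X_prime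

theorem X_notMem_span_X {i j : σ} (hij : i ≠ j) :
    (X j : MvPolynomial σ K) ∉ Ideal.span {(X i : MvPolynomial σ K)} := by
  classical
  intro h
  obtain ⟨c, hc⟩ := Ideal.mem_span_singleton.mp h
  simpa [hij] using congrArg (eval (fun k => if k = j then (1 : K) else 0)) hc

section

local notation "𝔞" => (Ideal.span {X 0 ^ 2, X 0 * X 1} : Ideal (MvPolynomial (Fin 2) K))

theorem span_X_sq_X_mul_X_eq_span_monomial :
    𝔞 = Ideal.span ((fun g => monomial g (1 : K)) ''
      {Finsupp.single 0 2, Finsupp.single 0 1 + Finsupp.single 1 1}) := by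
  rw [Set.image_pair, X_pow_eq_monomial, monomial_single_add, pow_one]
  rfl

theorem isAntichain_exponents_X_sq_X_mul_X :
    IsAntichain (· ≤ ·) ({Finsupp.single 0 2, Finsupp.single 0 1 + Finsupp.single 1 1} :
      Set (Fin 2 →₀ ℕ)) := by
  refine IsAntichain.singleton.insert (fun b hb _ hle => ?_) (fun b hb _ hle => ?_)
  · rw [Set.mem_singleton_iff.mp hb] at hle
    simpa using hle 1
  · rw [Set.mem_singleton_iff.mp hb] at hle
    simpa using hle 0

theorem X_zero_notMem_span_X_sq_X_mul_X : (X 0 : MvPolynomial (Fin 2) K) ∉ 𝔞 := by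
  rw [span_X_sq_X_mul_X_eq_span_monomial, X, monomial_one_mem_span_monomial_one_iff]
  rintro ⟨g, rfl | rfl, hle⟩
  · simpa using hle 0
  · simpa using hle 1

theorem radical_span_X_sq_X_mul_X :
    Ideal.radical 𝔞 = Ideal.span {(X 0 : MvPolynomial (Fin 2) K)} := by
  refine le_antisymm ((isPrime_span_X 0).radical_le_iff.mpr ?_) ?_
  · rw [Ideal.span_le, Set.pair_subset_iff]
    exact ⟨Ideal.mem_span_singleton.mpr (dvd_pow_self _ two_ne_zero),
      Ideal.mem_span_singleton.mpr (dvd_mul_right _ _)⟩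
  · rw [Ideal.span_singleton_le_iff_mem]
    exact ⟨2, Ideal.subset_span (Set.mem_insert _ _)⟩

theorem minimalPrimes_span_X_sq_X_mul_X :
    Ideal.minimalPrimes 𝔞 = {Ideal.span {(X 0 : MvPolynomial (Fin 2) K)}} := by
  have := isPrime_span_X (K := K) (0 : Fin 2)
  rw [← Ideal.radical_minimalPrimes, radical_span_X_sq_X_mul_X,
    Ideal.minimalPrimes_eq_subsingleton_self]

theorem not_isClean_span_X_sq_X_mul_X : ¬ IsClean 𝔞 := by
  intro hclean
  refine X_zero_notMem_span_X_sq_X_mul_X (hclean.mem_of_mul_mem (a := X 1) ?_ ?_)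
  · rw [minimalPrimes_span_X_sq_X_mul_X]
    rintro p rfl
    exact X_notMem_span_X zero_ne_one
  · rw [mul_comm]
    exact Ideal.subset_span (Set.mem_insert_of_mem _ rfl)

theorem idealHeight_span_X_sq_X_mul_X : idealHeight 𝔞 = 1 := by
  rw [idealHeight_eq_height, Ideal.height_eq_inf_minimalPrimes, minimalPrimes_span_X_sq_X_mul_X]
  simp only [Set.mem_singleton_iff, iInf_iInf_eq_left]
  exact Ideal.height_span_singleton_eq_one_of_mem_nonZeroDivisors
    (mem_nonZeroDivisors_of_ne_zero (X_ne_zero 0)) X_prime.not_isUnit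

theorem mu_span_X_sq_X_mul_X : mu 𝔞 = 2 := by
  have hne : (Finsupp.single 0 2 : Fin 2 →₀ ℕ) ≠ Finsupp.single 0 1 + Finsupp.single 1 1 :=
    fun h => by simpa using DFunLike.congr_fun h 1
  rw [span_X_sq_X_mul_X_eq_span_monomial,
    mu_span_monomial_one isAntichain_exponents_X_sq_X_mul_X, Set.ncard_pair hne]

end

/-- remark after Theorem 2.5: `K[x,y]/(x², xy)` is not clean, although
`(x², xy)` is an almost complete intersection monomial ideal (`μ(I) = ht I + 1`). -/
theorem not_clean_x_sq_xy {K : Type*} [Field K] :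
    ¬ IsClean (Ideal.span {X 0 ^ 2, X 0 * X 1} : Ideal (MvPolynomial (Fin 2) K)) ∧
    IsMonomialIdeal (Ideal.span {X 0 ^ 2, X 0 * X 1} : Ideal (MvPolynomial (Fin 2) K)) ∧
    (mu (Ideal.span {X 0 ^ 2, X 0 * X 1} : Ideal (MvPolynomial (Fin 2) K)) : ℕ∞) =
      idealHeight (Ideal.span {X 0 ^ 2, X 0 * X 1} : Ideal (MvPolynomial (Fin 2) K)) + 1 := by
  refine ⟨not_isClean_span_X_sq_X_mul_X, ⟨_, span_X_sq_X_mul_X_eq_span_monomial⟩, ?_⟩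
  rw [mu_span_X_sq_X_mul_X, idealHeight_span_X_sq_X_mul_X]
  rfl
end
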